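/- Let p be an odd prime, and let i ≥ 0 and r ≥ 0 be integers. For all a, b, c, d ∈ 𝔽_p and every P ∈ V_r^{(i)}, the substituted polynomial P(aX+cY, bX+dY) again lies in V_r^{(i)}; in other words, V_r^{(i)} is stable under the substitution action of GL_2(𝔽_p) on V_r. -/

import Mathlib

/-
The substitution is an `F`-algebra map sending each variable to a linear form, so it preserves
degrees of homogeneous polynomials. Since `a, b, c, d` lie in `𝔽_p`, Frobenius fixes them, and
`θ` is sent to `(ad - bc) θ`; hence the substitution maps multiples of `θ^i` to multiples of `θ^i`.
-/

open MvPolynomial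

/-- The substitution action: `P(X,Y) ↦ P(aX+cY, bX+dY)` on `F[X,Y] = MvPolynomial (Fin 2) F`,
for `a b c d ∈ 𝔽_p` viewed in `F` via the canonical map. -/
noncomputable def substACT (p : ℕ) [Fact p.Prime] (F : Type*) [Field F]
    [Algebra (ZMod p) F] (a b c d : ZMod p) :
    MvPolynomial (Fin 2) F →ₐ[F] MvPolynomial (Fin 2) F :=
  aeval (fun i : Fin 2 =>
    if i = 0 then C (algebraMap (ZMod p) F a) * X 0 + C (algebraMap (ZMod p) F c) * X 1
    else C (algebraMap (ZMod p) F b) * X 0 + C (algebraMap (ZMod p) F d) * X 1)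

theorem pow_dvd_map_of_dvd_map {M F : Type*} [CommMonoid M] [FunLike F M M] [MonoidHomClass F M M]
    (f : F) {x y : M} (i : ℕ) (hx : x ∣ f x) (hy : x ^ i ∣ y) : x ^ i ∣ f y :=
  (pow_dvd_pow_of_dvd hx i).trans (map_pow f x i ▸ map_dvd f hy)

section Substitution

variable (p : ℕ) [Fact p.Prime] (F : Type*) [Field F] [Algebra (ZMod p) F] (a b c d : ZMod p)

theorem isHomogeneous_substACT_X (j : Fin 2) : (substACT p F a b c d (X j)).IsHomogeneous 1 := by
  rw [substACT, aeval_X]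
  split <;> exact (isHomogeneous_C_mul_X _ _).add (isHomogeneous_C_mul_X _ _)

theorem isHomogeneous_substACT {P : MvPolynomial (Fin 2) F} {r : ℕ} (hP : P.IsHomogeneous r) :
    (substACT p F a b c d P).IsHomogeneous r := by
  rw [aeval_unique (substACT p F a b c d), ← one_mul r]
  exact hP.aeval _ (isHomogeneous_substACT_X p F a b c d)

theorem substACT_theta :
    substACT p F a b c d (X 0 ^ p * X 1 - X 0 * X 1 ^ p) =
      C (algebraMap (ZMod p) F (a * d - b * c)) * (X 0 ^ p * X 1 - X 0 * X 1 ^ p) := by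
  have : CharP F p := charP_of_injective_algebraMap (algebraMap (ZMod p) F).injective p
  simp only [substACT, map_sub, map_mul, map_pow, aeval_X, reduceIte, Fin.one_eq_zero_iff,
    OfNat.ofNat_ne_one, if_false]
  simp only [add_pow_char, mul_pow, ← C_pow, ← map_pow (algebraMap (ZMod p) F), ZMod.pow_card]
  ring

theorem theta_dvd_substACT_theta :
    X 0 ^ p * X 1 - X 0 * X 1 ^ p ∣ substACT p F a b c d (X 0 ^ p * X 1 - X 0 * X 1 ^ p) :=
  substACT_theta p F a b c d ▸ dvd_mul_left _ _

end Substitution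

theorem zigzag_stmt1_general (p : ℕ) [Fact p.Prime]
    (F : Type*) [Field F] [Algebra (ZMod p) F]
    (i r : ℕ) (a b c d : ZMod p)
    (θ : MvPolynomial (Fin 2) F) (hθ : θ = X 0 ^ p * X 1 - X 0 * X 1 ^ p)
    (P : MvPolynomial (Fin 2) F)
    (hhom : P.IsHomogeneous r) (hdvd : θ ^ i ∣ P) :
    (substACT p F a b c d P).IsHomogeneous r ∧ θ ^ i ∣ substACT p F a b c d P := by
  subst hθ
  exact ⟨isHomogeneous_substACT p F a b c d hhom,
    pow_dvd_map_of_dvd_map _ i (theta_dvd_substACT_theta p F a b c d) hdvd⟩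

/-- Let `p` be an odd prime, `i ≥ 0`, `r ≥ 0`.  For all `a b c d ∈ 𝔽_p` and
every `P ∈ V_r^{(i)}` (i.e. `P` homogeneous of degree `r` and `θ^i ∣ P`, where
`θ = X^p Y − X Y^p`), the substituted polynomial `P(aX+cY, bX+dY)` again lies in
`V_r^{(i)}`: the submodule `V_r^{(i)}` is stable under the substitution action. -/
theorem zigzag_stmt1 (p : ℕ) [Fact p.Prime] (hp : Odd p)
    (F : Type*) [Field F] [Algebra (ZMod p) F] [IsAlgClosure (ZMod p) F]
    (i r : ℕ) (a b c d : ZMod p)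
    (θ : MvPolynomial (Fin 2) F) (hθ : θ = X 0 ^ p * X 1 - X 0 * X 1 ^ p)
    (P : MvPolynomial (Fin 2) F)
    (hhom : P.IsHomogeneous r) (hdvd : θ ^ i ∣ P) :
    (substACT p F a b c d P).IsHomogeneous r ∧ θ ^ i ∣ substACT p F a b c d P :=
  zigzag_stmt1_general p F i r a b c d θ hθ P hhom hdvd
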